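/- The shadow map of the autonomous d₄P^(II) map preserves the degree-eight invariant Δ₈: for all a, b, c, d, x, y, z, u, x₁ in ℂ with 1 − x² ≠ 0, if (1 − x²)·x₁ = x²·y − y·z² − u·z² + u, then Δ₈(x₁, x, y, z) = Δ₈(x, y, z, u). -/
import Mathlib


/-- The degree-eight invariant `Δ₈` of the autonomous `d₄P^(II)` map, in affine coordinates. -/
noncomputable def Δ₈ (a b c d x y z u : ℂ) : ℂ :=
  a * ((u^2 + z^2 + y^2 + x^2)
        - z^2 * y^2 * (u*z + x*y + y*z)^2
        - (2*y*u*z^2 + 2*u*z*x*y + x^2*z^2 + 2*x*z*y^2 + 2*x^2*y^2 + u^2*y^2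
            + 2*z^2*y^2 + 2*u^2*z^2)
        + (2*x^2*y^2*z^2 + 2*u*y^3*z^2 + 2*x*y^2*z^3 + 2*y*u*z^4 + z^2*y^4
            + y^2*z^4 + 2*u^2*y^2*z^2 + x^2*y^4 + 2*u*x*y^3*z + 2*u*x*y*z^3
            + 2*x*z*y^4 + z^4*u^2))
    + b * (1 - z^2) * (1 - y^2) * (z + x) * (u + y)
    + c * (x*z - z^2*y^2 + y*u - y*u*z^2 - x*z*y^2)
    - d * (x + z - z*y^2 - x*y^2 - u*z^2 + u - y*z^2 + y)

/-- The shadow map `φ_s^(II)` of the autonomous `d₄P^(II)` map preserves the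
degree-eight invariant `Δ₈`. -/
theorem d4PII_shadow_preserves_Delta8 (a b c d x y z u x₁ : ℂ)
    (h : 1 - x^2 ≠ 0)
    (hrec : (1 - x^2) * x₁ = x^2*y - y*z^2 - u*z^2 + u) :
    Δ₈ a b c d x₁ x y z = Δ₈ a b c d x y z u := by
  have hx2 : ((1 - x^2) * x₁)^2 = (x^2*y - y*z^2 - u*z^2 + u)^2 := by rw [hrec]
  have key : (1 - x^2)^2 * Δ₈ a b c d x₁ x y z = (1 - x^2)^2 * Δ₈ a b c d x y z u := by
    unfold Δ₈
    linear_combination (a - a*y^2 - 2*a*x^2 + 2*a*x^2*y^2 + a*x^4 - a*x^4*y^2) * hx2 + (-d + d*x^2 + c*y - c*x^2*y + b*z - b*y^2*z + b*x - b*x*y^2 - b*x^2*z + b*x^2*y^2*z - b*x^3 + b*x^3*y^2 - 2*a*x*y*z + 2*a*x*y^3*z - 2*a*x^2*y + 2*a*x^2*y^3 + 2*a*x^3*y*z - 2*a*x^3*y^3*z + 2*a*x^4*y - 2*a*x^4*y^3) * (1 - x^2) * hrec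
  exact mul_left_cancel₀ (pow_ne_zero 2 h) key
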